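/- arXiv:1610.06030 — 3 statements merged into one kernel-verified Lean document; each statement's English description precedes it below -/
import Mathlib

section
/- There exists a constant K > 0, independent of c, such that for all c ≥ 1 and all ξ ∈ ℝⁿ, the symbol P_c(ξ) = sqrt(c²|ξ|² + c⁴/4) - c²/2 + 1 satisfies P_c(ξ) ≥ K·sqrt(1 + |ξ|²). -/
/-!
For `c ≥ 1` the symbol already dominates `(1 + |ξ|)/2`: squaring shows
`c²/2 + (|ξ| - 1)/2 ≤ √(c²|ξ|² + c⁴/4)`, and `(1 + |ξ|)/2 ≥ ⟨ξ⟩/2`. Hence `K = 1/2` works.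
-/

lemma sqrt_one_add_sq_le_one_add {r : ℝ} (hr : 0 ≤ r) : √(1 + r ^ 2) ≤ 1 + r :=
  Real.sqrt_le_iff.mpr ⟨by linarith, by nlinarith⟩

lemma half_sq_add_half_sub_le_sqrt {c r : ℝ} (hc : 1 ≤ c) (hr : 0 ≤ r) :
    c ^ 2 / 2 + (r - 1) / 2 ≤ √(c ^ 2 * r ^ 2 + c ^ 4 / 4) := by
  have hc2 : 1 ≤ c ^ 2 := one_le_pow₀ hc
  have hsq : (c ^ 2 / 2 + (r - 1) / 2) ^ 2 ≤ c ^ 2 * r ^ 2 + c ^ 4 / 4 := by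
    nlinarith [mul_nonneg (sub_nonneg.mpr hc2) (by nlinarith : (0 : ℝ) ≤ 2 * r ^ 2 - r + 1)]
  exact (le_abs_self _).trans (Real.abs_le_sqrt hsq)

lemma one_add_div_two_le_symbol {c r : ℝ} (hc : 1 ≤ c) (hr : 0 ≤ r) :
    (1 + r) / 2 ≤ √(c ^ 2 * r ^ 2 + c ^ 4 / 4) - c ^ 2 / 2 + 1 := by
  linarith [half_sq_add_half_sub_le_sqrt hc hr]

/-- There exists a constant `K > 0`, independent of `c`, such that for all `c ≥ 1` and all
`ξ ∈ ℝⁿ`, the symbol `P_c(ξ) = √(c²|ξ|² + c⁴/4) - c²/2 + 1` satisfies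
`P_c(ξ) ≥ K·√(1 + |ξ|²)`. -/
theorem uniform_lower_bound_symbol (n : ℕ) :
    ∃ K : ℝ, 0 < K ∧ ∀ c : ℝ, 1 ≤ c → ∀ ξ : EuclideanSpace ℝ (Fin n),
      Real.sqrt (c ^ 2 * ‖ξ‖ ^ 2 + c ^ 4 / 4) - c ^ 2 / 2 + 1
        ≥ K * Real.sqrt (1 + ‖ξ‖ ^ 2) := by
  refine ⟨1 / 2, by norm_num, fun c hc ξ => ?_⟩
  calc 1 / 2 * √(1 + ‖ξ‖ ^ 2) ≤ (1 + ‖ξ‖) / 2 := by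
        linarith [sqrt_one_add_sq_le_one_add (norm_nonneg ξ)]
    _ ≤ _ := one_add_div_two_le_symbol hc (norm_nonneg ξ)
end

section
/- There exists a constant C > 0 such that for all c ≥ 1 and all ξ ∈ ℝⁿ, |(1 + |ξ|²)/P_c(ξ) - 1| ≤ C·|ξ|³/c², where P_c(ξ) = sqrt(c²|ξ|² + c⁴/4) - c²/2 + 1. -/
/-!
Write `P_c(ξ) = 1 + T` with `T = √(c²r² + c⁴/4) - c²/2 ≥ 0`, `r = |ξ|`. Squaring shows that `T`
solves `T (T + c²) = c² r²`, so `r² - T = T² / c²` and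
`(1 + r²) / P_c(ξ) - 1 = T² / (c² (T + 1))`.
The same relation gives `T ≤ r²`, hence `T² / (T + 1) ≤ min (T, T²) ≤ min (r², r⁴) ≤ r³`,
and the estimate holds with `C = 1`.
-/

namespace SymbolRatio

/-- The symbol `P_c - 1` as a function of `c` and `r = |ξ|`. -/
noncomputable def kinetic (c r : ℝ) : ℝ := Real.sqrt (c ^ 2 * r ^ 2 + c ^ 4 / 4) - c ^ 2 / 2

variable {c r : ℝ}

theorem kinetic_nonneg (c r : ℝ) : 0 ≤ kinetic c r := by
  have h : Real.sqrt ((c ^ 2 / 2) ^ 2) ≤ Real.sqrt (c ^ 2 * r ^ 2 + c ^ 4 / 4) :=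
    Real.sqrt_le_sqrt (by nlinarith [sq_nonneg (c * r)])
  rw [Real.sqrt_sq (by positivity)] at h
  exact sub_nonneg.mpr h

theorem kinetic_mul_add_sq (c r : ℝ) : kinetic c r * (kinetic c r + c ^ 2) = c ^ 2 * r ^ 2 := by
  have h := Real.sq_sqrt (show 0 ≤ c ^ 2 * r ^ 2 + c ^ 4 / 4 by positivity)
  unfold kinetic
  linear_combination h

theorem kinetic_le_sq (hc : c ≠ 0) : kinetic c r ≤ r ^ 2 := by
  have hc2 : 0 < c ^ 2 := by positivity
  nlinarith [kinetic_mul_add_sq c r, kinetic_nonneg c r]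

theorem sq_div_add_one_le_pow_three {T : ℝ} (hT : 0 ≤ T) (hr : 0 ≤ r) (hTr : T ≤ r ^ 2) :
    T ^ 2 / (T + 1) ≤ r ^ 3 := by
  rw [div_le_iff₀ (by positivity)]
  rcases le_total r 1 with hr1 | hr1
  · have hT2 : T ^ 2 ≤ r ^ 4 := by nlinarith
    nlinarith [pow_le_pow_of_le_one hr hr1 (show 3 ≤ 4 by norm_num), pow_nonneg hr 3]
  · have hr23 : r ^ 2 ≤ r ^ 3 := pow_le_pow_right₀ hr1 (by norm_num)
    nlinarith

theorem div_kinetic_add_one_sub_one (hc : c ≠ 0) :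
    (1 + r ^ 2) / (kinetic c r + 1) - 1 = kinetic c r ^ 2 / (kinetic c r + 1) / c ^ 2 := by
  have hT1 : kinetic c r + 1 ≠ 0 := (add_pos_of_nonneg_of_pos (kinetic_nonneg c r) one_pos).ne'
  field_simp
  linear_combination -(kinetic_mul_add_sq c r)

theorem abs_div_kinetic_add_one_sub_one_le (hc : c ≠ 0) (hr : 0 ≤ r) :
    |(1 + r ^ 2) / (kinetic c r + 1) - 1| ≤ r ^ 3 / c ^ 2 := by
  rw [div_kinetic_add_one_sub_one hc, abs_of_nonneg (by have := kinetic_nonneg c r; positivity)]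
  gcongr
  exact sq_div_add_one_le_pow_three (kinetic_nonneg c r) hr (kinetic_le_sq hc)

end SymbolRatio

/-- There exists a constant `C > 0` such that for all `c ≥ 1` and all `ξ ∈ ℝⁿ`,
`|(1 + |ξ|²)/P_c(ξ) - 1| ≤ C·|ξ|³/c²`, where `P_c(ξ) = √(c²|ξ|² + c⁴/4) - c²/2 + 1`. -/
theorem symbol_ratio_estimate (n : ℕ) :
    ∃ C : ℝ, 0 < C ∧ ∀ c : ℝ, 1 ≤ c → ∀ ξ : EuclideanSpace ℝ (Fin n),
      |(1 + ‖ξ‖ ^ 2) / (Real.sqrt (c ^ 2 * ‖ξ‖ ^ 2 + c ^ 4 / 4) - c ^ 2 / 2 + 1) - 1|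
        ≤ C * ‖ξ‖ ^ 3 / c ^ 2 := by
  refine ⟨1, one_pos, fun c hc ξ => ?_⟩
  rw [one_mul]
  exact SymbolRatio.abs_div_kinetic_add_one_sub_one_le (by positivity) (norm_nonneg ξ)
end

section
/- Let 0 < s < n. There exists C > 0 such that for every f ∈ L^{n/s,1}(ℝⁿ), the Riesz potential x ↦ ∫_{ℝⁿ} f(y)/|x−y|^{n−s} dy is essentially bounded with ‖∫ f(y)/|x−y|^{n−s} dy‖_{L^∞(ℝⁿ)} ≤ C ‖f‖_{L^{n/s,1}(ℝⁿ)}. -/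
/-! At a point `x`, the potential is bounded by `∫ ‖f‖ dν`, where `ν` has density
`‖x - y‖ ^ (s - n)`. Splitting a set `A` at the ball of radius `(vol A) ^ (1 / n)` and using the
scaling of the kernel shows `ν A ≤ C (vol A) ^ (s / n)`, i.e. the kernel lies in weak
`L^{n/(n-s)}`. The layer-cake formula `∫ ‖f‖ dν = ∫₀^∞ ν {‖f‖ ≥ t} dt` then bounds the potential by
`C ∫₀^∞ (vol {‖f‖ ≥ t}) ^ (s / n) dt`, which is `(s / n) ‖f‖_{L^{n/s,1}}`. -/

open MeasureTheory ENNReal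

/-- The Lorentz quasinorm `‖f‖_{L^{p,q}(ℝⁿ)}` for `1 ≤ p < ∞` and `1 ≤ q ≤ ∞`:
`(p ∫₀^∞ λ^{q-1} |{|f| ≥ λ}|^{q/p} dλ)^{1/q}` for finite `q`, and
`sup_{λ>0} λ |{|f| ≥ λ}|^{1/p}` for `q = ∞`. -/
noncomputable def lorentzNorm (n : ℕ) (p : ℝ) (q : ℝ≥0∞)
    (f : EuclideanSpace ℝ (Fin n) → ℂ) : ℝ≥0∞ :=
  if q = ∞ then
    ⨆ l : ℝ, ENNReal.ofReal l * (volume {x | l ≤ ‖f x‖}) ^ (1 / p)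
  else
    (ENNReal.ofReal p * ∫⁻ l in Set.Ioi (0 : ℝ),
        ENNReal.ofReal (l ^ (q.toReal - 1)) * (volume {x | l ≤ ‖f x‖}) ^ (q.toReal / p))
      ^ (1 / q.toReal)

open Metric Module Set

theorem lintegral_ofReal_le_mul_lintegral_meas_le_rpow {α : Type*} [MeasurableSpace α]
    {μ ν : Measure α} {K : ℝ≥0∞} {a : ℝ} (hν : ∀ A, ν A ≤ K * μ A ^ a) (g : α → ℝ) :
    ∫⁻ x, ENNReal.ofReal (g x) ∂ν ≤ K * ∫⁻ t in Ioi 0, μ {x | t ≤ g x} ^ a := by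
  have hdist : Measurable fun t : ℝ ↦ μ {x | t ≤ g x} ^ a :=
    (ENNReal.continuous_rpow_const.measurable).comp
      (Antitone.measurable fun t t' htt' ↦ measure_mono fun x hx ↦ htt'.trans hx)
  -- `g` need not be measurable: approximate the integral from below by measurable functions.
  rw [← lintegral_const_mul _ hdist, ← iSup_lintegral_measurable_le_eq_lintegral]
  refine iSup₂_le fun h hh ↦ iSup_le fun hle ↦ ?_
  have h_ne_top : ∀ x, h x ≠ ∞ := fun x ↦ ne_top_of_le_ne_top ofReal_ne_top (hle x)
  calc ∫⁻ x, h x ∂ν = ∫⁻ x, ENNReal.ofReal (h x).toReal ∂ν := by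
        simp only [ofReal_toReal (h_ne_top _)]
    _ = ∫⁻ t in Ioi 0, ν {x | t ≤ (h x).toReal} :=
        lintegral_eq_lintegral_meas_le ν (ae_of_all _ fun _ ↦ toReal_nonneg)
          hh.ennreal_toReal.aemeasurable
    _ ≤ ∫⁻ t in Ioi 0, ν {x | t ≤ g x} := by
        refine setLIntegral_mono' measurableSet_Ioi fun t (ht : 0 < t) ↦ measure_mono ?_
        intro x (hx : t ≤ (h x).toReal)
        have hpos : 0 < h x := toReal_pos_iff.1 (ht.trans_le hx) |>.1
        have hg : 0 < g x := ofReal_pos.1 (hpos.trans_le (hle x))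
        exact hx.trans (toReal_le_of_le_ofReal hg.le (hle x))
    _ ≤ ∫⁻ t in Ioi 0, K * μ {x | t ≤ g x} ^ a := lintegral_mono fun t ↦ hν _

variable {E : Type*} [NormedAddCommGroup E] [NormedSpace ℝ E]

/-- At `y = 0` this is `0` rather than `∞`, matching the junk value `c / 0 = 0` in the
potential. -/
noncomputable def rieszKernel (s : ℝ) (y : E) : ℝ≥0∞ :=
  ENNReal.ofReal (‖y‖ ^ (s - finrank ℝ E))

variable {s : ℝ}

theorem measurable_rieszKernel [MeasurableSpace E] [BorelSpace E] :
    Measurable (rieszKernel (E := E) s) := by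
  unfold rieszKernel
  fun_prop

theorem rieszKernel_smul {r : ℝ} (hr : 0 < r) (y : E) :
    rieszKernel s (r • y) = ENNReal.ofReal (r ^ (s - finrank ℝ E)) * rieszKernel s y := by
  rw [rieszKernel, rieszKernel, norm_smul, Real.norm_of_nonneg hr.le,
    Real.mul_rpow hr.le (norm_nonneg y), ENNReal.ofReal_mul (by positivity)]

theorem rieszKernel_le_of_le_norm {r : ℝ} (hr : 0 < r) (hs : s ≤ finrank ℝ E) {y : E}
    (hy : r ≤ ‖y‖) : rieszKernel s y ≤ ENNReal.ofReal (r ^ (s - finrank ℝ E)) :=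
  ENNReal.ofReal_le_ofReal (Real.rpow_le_rpow_of_nonpos hr hy (by linarith))

theorem enorm_div_rpow_norm_eq_mul_rieszKernel {𝕜 : Type*} [RCLike 𝕜] (c : 𝕜) (y : E) :
    ‖c / ((‖y‖ ^ ((finrank ℝ E : ℝ) - s) : ℝ) : 𝕜)‖ₑ = ‖c‖ₑ * rieszKernel s y := by
  rw [div_eq_mul_inv, enorm_mul, ← RCLike.ofReal_inv, ← Real.rpow_neg (norm_nonneg y), neg_sub,
    rieszKernel, ← ofReal_norm (RCLike.ofReal _ : 𝕜), RCLike.norm_ofReal,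
    abs_of_nonneg (by positivity)]

theorem setLIntegral_diff_ball_rieszKernel_le (hsn : s ≤ finrank ℝ E) {r : ℝ} (hr : 0 < r)
    {_ : MeasurableSpace E} (μ : Measure E) (A : Set E) :
    ∫⁻ y in A \ ball 0 r, rieszKernel s y ∂μ ≤ ENNReal.ofReal (r ^ (s - finrank ℝ E)) * μ A :=
  calc _ ≤ ∫⁻ _ in A \ ball 0 r, ENNReal.ofReal (r ^ (s - finrank ℝ E)) ∂μ :=
        setLIntegral_mono measurable_const fun y hy ↦
          rieszKernel_le_of_le_norm hr hsn (by simpa using hy.2)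
    _ = ENNReal.ofReal (r ^ (s - finrank ℝ E)) * μ (A \ ball 0 r) := setLIntegral_const _ _
    _ ≤ _ := by gcongr; exact sdiff_subset

section HaarMeasure

variable [FiniteDimensional ℝ E] [MeasurableSpace E] [BorelSpace E] (μ : Measure E)
  [μ.IsAddHaarMeasure]

theorem setLIntegral_ball_rieszKernel {r : ℝ} (hr : 0 < r) :
    ∫⁻ y in ball 0 r, rieszKernel s y ∂μ
      = ENNReal.ofReal (r ^ s) * ∫⁻ y in ball 0 1, rieszKernel s y ∂μ := by
  have hpre : (r • ·) ⁻¹' ball (0 : E) r = ball 0 1 := by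
    ext y
    simp [norm_smul, abs_of_pos hr, mul_lt_iff_lt_one_right hr]
  have hscale : ENNReal.ofReal (r ^ (s - finrank ℝ E)) * ∫⁻ y in ball 0 1, rieszKernel s y ∂μ
      = ENNReal.ofReal (r ^ finrank ℝ E)⁻¹ * ∫⁻ y in ball 0 r, rieszKernel s y ∂μ :=
    calc _ = ∫⁻ y in ball 0 1, rieszKernel s (r • y) ∂μ := by
          simp only [rieszKernel_smul hr]
          rw [lintegral_const_mul _ measurable_rieszKernel]
      _ = ∫⁻ y in ball 0 r, rieszKernel s y ∂(Measure.map (r • ·) μ) := by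
          rw [setLIntegral_map measurableSet_ball measurable_rieszKernel (measurable_const_smul r),
            hpre]
      _ = _ := by
          rw [μ.map_addHaar_smul hr.ne', Measure.restrict_smul, lintegral_smul_measure,
            abs_of_pos (by positivity), smul_eq_mul]
  have hpow : r ^ finrank ℝ E * r ^ (s - finrank ℝ E) = r ^ s := by
    rw [← Real.rpow_natCast, ← Real.rpow_add hr, add_sub_cancel]
  calc _ = ENNReal.ofReal (r ^ finrank ℝ E) * (ENNReal.ofReal (r ^ finrank ℝ E)⁻¹ *
        ∫⁻ y in ball 0 r, rieszKernel s y ∂μ) := by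
        rw [← mul_assoc, ← ENNReal.ofReal_mul (by positivity), mul_inv_cancel₀ (by positivity),
          ENNReal.ofReal_one, one_mul]
    _ = _ := by
        rw [← hscale, ← mul_assoc, ← ENNReal.ofReal_mul (by positivity), hpow]

theorem setLIntegral_ball_rieszKernel_lt_top (hs : 0 < s) (hsn : s < finrank ℝ E) :
    ∫⁻ y in ball 0 1, rieszKernel s y ∂μ < ∞ := by
  have hdim : 1 ≤ finrank ℝ E := by exact_mod_cast hs.trans hsn
  have hint : IntegrableOn (fun y : E ↦ ‖y‖ ^ (s - finrank ℝ E)) (ball 0 1) μ := by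
    refine integrableOn_ball_of_norm_le_rpow hdim (α := finrank ℝ E - s) (C := 1) (by linarith)
      (ae_of_all _ fun y ↦ ?_) (measurable_norm.pow_const _).aestronglyMeasurable
    rw [one_mul, neg_sub, Real.norm_of_nonneg (by positivity)]
  simpa only [HasFiniteIntegral, rieszKernel,
    Real.enorm_of_nonneg (Real.rpow_nonneg (norm_nonneg _) _)] using hint.hasFiniteIntegral

theorem setLIntegral_rieszKernel_le (hs : 0 < s) (hsn : s < finrank ℝ E) (A : Set E) :
    ∫⁻ y in A, rieszKernel s y ∂μ
      ≤ (∫⁻ y in ball 0 1, rieszKernel s y ∂μ + 1) * μ A ^ (s / finrank ℝ E) := by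
  have hn : (0 : ℝ) < finrank ℝ E := hs.trans hsn
  rcases eq_or_ne (μ A) 0 with hA0 | hA0
  · simp [setLIntegral_measure_zero _ _ hA0]
  rcases eq_or_ne (μ A) ∞ with hAtop | hAtop
  · simp [hAtop, ENNReal.top_rpow_of_pos (div_pos hs hn)]
  set a := (μ A).toReal
  have ha : 0 < a := toReal_pos hA0 hAtop
  -- `r ^ n = μ A` makes both pieces of the splitting below of size `μ A ^ (s / n)`.
  set r := a ^ (finrank ℝ E : ℝ)⁻¹
  have hr : 0 < r := by positivity
  have hrs : r ^ s = a ^ (s / finrank ℝ E) := by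
    rw [← Real.rpow_mul ha.le, inv_mul_eq_div]
  have hrsn : r ^ (s - finrank ℝ E) * a = a ^ (s / finrank ℝ E) := by
    rw [← Real.rpow_mul ha.le, ← Real.rpow_add_one ha.ne']
    congr 1
    field_simp
    ring
  have hμA : μ A = ENNReal.ofReal a := (ofReal_toReal hAtop).symm
  calc ∫⁻ y in A, rieszKernel s y ∂μ
      ≤ ∫⁻ y in A ∩ ball 0 r, rieszKernel s y ∂μ + ∫⁻ y in A \ ball 0 r, rieszKernel s y ∂μ := by
        conv_lhs => rw [← inter_union_sdiff A (ball 0 r)]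
        exact lintegral_union_le _ _ _
    _ ≤ ∫⁻ y in ball 0 r, rieszKernel s y ∂μ + ENNReal.ofReal (r ^ (s - finrank ℝ E)) * μ A :=
        add_le_add (lintegral_mono_set inter_subset_right)
          (setLIntegral_diff_ball_rieszKernel_le hsn.le hr μ A)
    _ = _ := by
        rw [setLIntegral_ball_rieszKernel μ hr, hμA, ← ENNReal.ofReal_mul (by positivity), hrs,
          hrsn, ENNReal.ofReal_rpow_of_nonneg ha.le (by positivity)]
        ring

theorem enorm_rieszPotential_le {𝕜 : Type*} [RCLike 𝕜] (hs : 0 < s) (hsn : s < finrank ℝ E)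
    (f : E → 𝕜) (x : E) :
    ‖∫ y, f y / ((‖x - y‖ ^ ((finrank ℝ E : ℝ) - s) : ℝ) : 𝕜) ∂μ‖ₑ
      ≤ (∫⁻ y in ball 0 1, rieszKernel s y ∂μ + 1)
        * ∫⁻ t in Ioi 0, μ {y | t ≤ ‖f y‖} ^ (s / finrank ℝ E) := by
  have hdist : ∀ t : ℝ, μ {z | t ≤ ‖f (x - z)‖} = μ {y | t ≤ ‖f y‖} := fun t ↦
    (μ.measurePreserving_sub_left x).measure_preimage_equiv (f := MeasurableEquiv.subLeft x)
      {y | t ≤ ‖f y‖}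
  calc _ ≤ ∫⁻ y, ‖f y‖ₑ * rieszKernel s (x - y) ∂μ :=
        (enorm_integral_le_lintegral_enorm _).trans_eq <|
          lintegral_congr fun y ↦ enorm_div_rpow_norm_eq_mul_rieszKernel _ _
    _ = ∫⁻ z, ‖f (x - z)‖ₑ * rieszKernel s z ∂μ := by
        rw [← lintegral_sub_left_eq_self _ x]
        simp only [_root_.sub_sub_cancel]
    _ = ∫⁻ z, ENNReal.ofReal ‖f (x - z)‖ ∂μ.withDensity (rieszKernel s) := by
        rw [lintegral_withDensity_eq_lintegral_mul_non_measurable _ measurable_rieszKernel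
          (ae_of_all _ fun _ ↦ ofReal_lt_top)]
        simp only [Pi.mul_apply, ofReal_norm, mul_comm]
    _ ≤ _ := by
        simp_rw [← hdist]
        refine lintegral_ofReal_le_mul_lintegral_meas_le_rpow (fun A ↦ ?_) _
        rw [withDensity_apply']
        exact setLIntegral_rieszKernel_le μ hs hsn A

end HaarMeasure

theorem lorentzNorm_one (n : ℕ) (p : ℝ) (f : EuclideanSpace ℝ (Fin n) → ℂ) :
    lorentzNorm n p 1 f
      = ENNReal.ofReal p * ∫⁻ l in Ioi 0, volume {x | l ≤ ‖f x‖} ^ (1 / p) := by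
  simp [lorentzNorm]

theorem riesz_potential_endpoint_general (n : ℕ) (s : ℝ) (hs0 : 0 < s)
    (hsn : s < (n : ℝ)) :
    ∃ C : ℝ, 0 < C ∧ ∀ f : EuclideanSpace ℝ (Fin n) → ℂ,
      lorentzNorm n ((n : ℝ) / s) 1 f < ∞ →
      eLpNorm
          (fun x => ∫ y : EuclideanSpace ℝ (Fin n),
            f y / ((‖x - y‖ ^ ((n : ℝ) - s) : ℝ) : ℂ)) ∞ volume
        ≤ ENNReal.ofReal C * lorentzNorm n ((n : ℝ) / s) 1 f := by
  have hsn' : s < finrank ℝ (EuclideanSpace ℝ (Fin n)) := by simpa using hsn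
  set B := ∫⁻ y in ball 0 1, rieszKernel s y ∂(volume : Measure (EuclideanSpace ℝ (Fin n)))
  have hB : B + 1 ≠ ∞ :=
    add_ne_top.2 ⟨(setLIntegral_ball_rieszKernel_lt_top _ hs0 hsn').ne, one_ne_top⟩
  have hn : (0 : ℝ) < n := hs0.trans hsn
  refine ⟨(B + 1).toReal * (s / n), mul_pos (toReal_pos (by simp) hB) (div_pos hs0 hn),
    fun f _ ↦ ?_⟩
  have hC : ENNReal.ofReal ((B + 1).toReal * (s / n)) * ENNReal.ofReal (n / s) = B + 1 := by
    rw [← ENNReal.ofReal_mul (by positivity), mul_assoc,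
      div_mul_div_cancel₀' hs0.ne', div_self hn.ne', mul_one, ofReal_toReal hB]
  rw [lorentzNorm_one, one_div_div, ← mul_assoc, hC, eLpNorm_exponent_top]
  refine eLpNormEssSup_le_of_ae_enorm_bound (ae_of_all _ fun x ↦ ?_)
  simpa using enorm_rieszPotential_le volume hs0 hsn' f x

/-- Endpoint fractional integration: for `0 < s < n` there is `C > 0` such that for every
`f ∈ L^{n/s,1}(ℝⁿ)`, the Riesz potential `x ↦ ∫ f(y)/|x-y|^{n-s} dy` is essentially bounded
with `‖∫ f(y)/|x-y|^{n-s} dy‖_{L^∞} ≤ C ‖f‖_{L^{n/s,1}}`. -/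
theorem riesz_potential_endpoint (n : ℕ) (hn : 1 ≤ n) (s : ℝ) (hs0 : 0 < s)
    (hsn : s < (n : ℝ)) :
    ∃ C : ℝ, 0 < C ∧ ∀ f : EuclideanSpace ℝ (Fin n) → ℂ,
      lorentzNorm n ((n : ℝ) / s) 1 f < ∞ →
      eLpNorm
          (fun x => ∫ y : EuclideanSpace ℝ (Fin n),
            f y / ((‖x - y‖ ^ ((n : ℝ) - s) : ℝ) : ℂ)) ∞ volume
        ≤ ENNReal.ofReal C * lorentzNorm n ((n : ℝ) / s) 1 f :=
  riesz_potential_endpoint_general n s hs0 hsn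
end
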